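/- arXiv:1110.5833 — 7 statements merged into one kernel-verified Lean document; each statement's English description precedes it below -/
import Mathlib

section
/- Let E : Σ → B(X) be an operator-valued measure on a measurable space (Ω, Σ) such that E(B) is an idempotent for every B ∈ Σ. Then E is spectral: for all A, B ∈ Σ, E(A ∩ B) = E(A) · E(B). -/
/-!
Finite additivity turns `E (A ∪ B)` into `E A + E B` for disjoint `A, B`; since `E A`, `E B` and
their sum are idempotents, `E A` and `E B` anticommute, and an idempotent anticommuting with an
element of a torsion-free ring annihilates it, so `E A * E B = 0`. Splitting `A` and `B` along
`A ∩ B` then gives `E A * E B = E (A ∩ B)`.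
-/

/-- An operator-valued measure: countably additive in the strong operator topology
(equivalently, by the Orlicz–Pettis theorem, in the weak operator topology). -/
def IsOperatorValuedMeasure {Ω X Y : Type*} [MeasurableSpace Ω]
    [NormedAddCommGroup X] [NormedSpace ℂ X] [NormedAddCommGroup Y] [NormedSpace ℂ Y]
    (E : Set Ω → (X →L[ℂ] Y)) : Prop :=
  ∀ B : ℕ → Set Ω, (∀ i, MeasurableSet (B i)) → Pairwise (Function.onFun Disjoint B) →
    ∀ x : X, HasSum (fun i => E (B i) x) (E (⋃ i, B i) x)

open MeasureTheory

theorem IsIdempotentElem.mul_eq_zero_of_add {R : Type*} [Ring R] [IsAddTorsionFree R] {p q : R}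
    (hp : IsIdempotentElem p) (hq : IsIdempotentElem q) (hpq : IsIdempotentElem (p + q)) :
    p * q = 0 :=
  hp.mul_eq_zero_of_anticommute ((hp.add_iff hq).mp hpq)

namespace IsOperatorValuedMeasure

variable {Ω X Y : Type*} [MeasurableSpace Ω] [NormedAddCommGroup X] [NormedSpace ℂ X]
  [NormedAddCommGroup Y] [NormedSpace ℂ Y] {E : Set Ω → (X →L[ℂ] Y)}

theorem apply_empty (hE : IsOperatorValuedMeasure E) : E ∅ = 0 := by
  ext x
  have h := hE (fun _ => ∅) (fun _ => .empty) (fun _ _ _ => disjoint_bot_left) x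
  exact (summable_const_iff _).mp h.summable

noncomputable def vectorMeasure (hE : IsOperatorValuedMeasure E) (x : X) :
    VectorMeasure Ω Y where
  measureOf' s := open Classical in if MeasurableSet s then E s x else 0
  empty' := by simp [hE.apply_empty]
  not_measurable' s hs := if_neg hs
  m_iUnion' B hB hBd := by
    simpa only [hB, MeasurableSet.iUnion hB, if_true] using hE B hB hBd x

theorem vectorMeasure_apply (hE : IsOperatorValuedMeasure E) (x : X) {s : Set Ω}
    (hs : MeasurableSet s) : hE.vectorMeasure x s = E s x :=
  if_pos hs

theorem apply_union (hE : IsOperatorValuedMeasure E) {A B : Set Ω} (hA : MeasurableSet A)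
    (hB : MeasurableSet B) (hAB : Disjoint A B) : E (A ∪ B) = E A + E B := by
  ext x
  have h := (hE.vectorMeasure x).of_union hAB hA hB
  rwa [hE.vectorMeasure_apply x hA, hE.vectorMeasure_apply x hB,
    hE.vectorMeasure_apply x (hA.union hB)] at h

theorem mul_eq_zero_of_disjoint {E : Set Ω → (X →L[ℂ] X)} (hE : IsOperatorValuedMeasure E)
    (hidem : ∀ B : Set Ω, MeasurableSet B → IsIdempotentElem (E B)) {A B : Set Ω}
    (hA : MeasurableSet A) (hB : MeasurableSet B) (hAB : Disjoint A B) : E A * E B = 0 := by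
  have : IsAddTorsionFree (X →L[ℂ] X) := .of_isTorsionFree ℂ _
  refine (hidem A hA).mul_eq_zero_of_add (hidem B hB) ?_
  rw [← hE.apply_union hA hB hAB]
  exact hidem _ (hA.union hB)

end IsOperatorValuedMeasure

theorem stmt1_general {Ω X : Type*} [MeasurableSpace Ω]
    [NormedAddCommGroup X] [NormedSpace ℂ X]
    (E : Set Ω → (X →L[ℂ] X)) (hE : IsOperatorValuedMeasure E)
    (hidem : ∀ B : Set Ω, MeasurableSet B → E B * E B = E B) :
    ∀ A B : Set Ω, MeasurableSet A → MeasurableSet B → E (A ∩ B) = E A * E B := by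
  intro A B hA hB
  have hAiB := hA.inter hB
  calc E (A ∩ B) = (E (A ∩ B) + E (A \ B)) * E (A ∩ B) := by
        rw [add_mul, hidem _ hAiB, hE.mul_eq_zero_of_disjoint hidem (hA.diff hB) hAiB
          (Set.disjoint_sdiff_left.mono_right Set.inter_subset_right), add_zero]
    _ = E A * E (A ∩ B) := by
        rw [← hE.apply_union hAiB (hA.diff hB) Set.disjoint_sdiff_inter.symm, Set.inter_union_sdiff]
    _ = E A * (E (A ∩ B) + E (B \ A)) := by
        rw [mul_add, hE.mul_eq_zero_of_disjoint hidem hA (hB.diff hA) Set.disjoint_sdiff_right,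
          add_zero]
    _ = E A * E B := by
        rw [← hE.apply_union hAiB (hB.diff hA)
          (Set.disjoint_sdiff_right.mono_left Set.inter_subset_left), Set.inter_comm,
          Set.inter_union_sdiff]

/-- If `E : Σ → B(X)` is an operator-valued measure each of whose values is an
idempotent, then `E` is spectral: `E (A ∩ B) = E A * E B` for all measurable `A, B`. -/
theorem stmt1 {Ω X : Type*} [MeasurableSpace Ω]
    [NormedAddCommGroup X] [NormedSpace ℂ X] [CompleteSpace X]
    (E : Set Ω → (X →L[ℂ] X)) (hE : IsOperatorValuedMeasure E)
    (hidem : ∀ B : Set Ω, MeasurableSet B → E B * E B = E B) :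
    ∀ A B : Set Ω, MeasurableSet A → MeasurableSet B → E (A ∩ B) = E A * E B :=
  stmt1_general E hE hidem
end

section
/- Let (x_i)_{i∈ℕ} ⊆ H and (y_i)_{i∈ℕ} ⊆ H be Bessel sequences in a Hilbert space H (each with a finite Bessel bound) such that x = Σ_i ⟨x, y_i⟩ x_i for all x ∈ H. Then (x_i) satisfies a lower frame inequality: C⁻¹‖x‖² ≤ Σ_i |⟨x, x_i⟩|² for all x ∈ H, where C is a Bessel bound for (y_i). Hence both (x_i) and (y_i) are frames. -/
/-!
Pairing the expansion `v = Σ aᵢ xᵢ` with `v` gives `‖v‖² = Σ re (aᵢ ⟪v, xᵢ⟫)`. Bounding each term by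
`(|aᵢ|² / C + C |⟪xᵢ, v⟫|²) / 2` and using `Σ |aᵢ|² ≤ C ‖v‖²` yields `‖v‖² ≤ (‖v‖² + C S) / 2`,
i.e. `‖v‖² ≤ C S` with `S = Σ |⟪xᵢ, v⟫|²`. The coefficients `aᵢ = ⟪yᵢ, v⟫` obey this bound because
`(yᵢ)` is Bessel with bound `C`.
-/

open RCLike

section

variable {𝕜 E ι : Type*} [RCLike 𝕜] [NormedAddCommGroup E] [InnerProductSpace 𝕜 E]

theorem re_mul_le_half_add_of_pos (a b : 𝕜) {c : ℝ} (hc : 0 < c) :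
    re (a * b) ≤ (‖a‖ ^ 2 / c + c * ‖b‖ ^ 2) / 2 := by
  have hamgm : 2 * (‖a‖ * ‖b‖) ≤ ‖a‖ ^ 2 / c + c * ‖b‖ ^ 2 := by
    rw [div_add' _ _ _ hc.ne', le_div_iff₀ hc]
    nlinarith [sq_nonneg (‖a‖ - c * ‖b‖)]
  calc re (a * b) ≤ ‖a * b‖ := re_le_norm _
    _ = ‖a‖ * ‖b‖ := norm_mul a b
    _ ≤ _ := by linarith

theorem hasSum_re_mul_inner_of_hasSum_smul {a : ι → 𝕜} {x : ι → E} {v : E}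
    (hv : HasSum (fun i => a i • x i) v) :
    HasSum (fun i => re (a i * inner 𝕜 v (x i))) (‖v‖ ^ 2) := by
  have h := (hv.mapL (innerSL 𝕜 v)).mapL reCLM
  simpa only [Function.comp_def, innerSL_apply_apply, inner_smul_right, reCLM_apply,
    inner_self_eq_norm_sq] using h

theorem norm_sq_le_mul_tsum_of_hasSum_smul {a : ι → 𝕜} {x : ι → E} {v : E} {c : ℝ} (hc : 0 < c)
    (hv : HasSum (fun i => a i • x i) v) (ha : Summable fun i => ‖a i‖ ^ 2)
    (ha_le : ∑' i, ‖a i‖ ^ 2 ≤ c * ‖v‖ ^ 2)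
    (hx : Summable fun i => ‖(inner 𝕜 (x i) v : 𝕜)‖ ^ 2) :
    ‖v‖ ^ 2 ≤ c * ∑' i, ‖(inner 𝕜 (x i) v : 𝕜)‖ ^ 2 := by
  have hbound : HasSum (fun i => (‖a i‖ ^ 2 / c + c * ‖(inner 𝕜 (x i) v : 𝕜)‖ ^ 2) / 2)
      (((∑' i, ‖a i‖ ^ 2) / c + c * ∑' i, ‖(inner 𝕜 (x i) v : 𝕜)‖ ^ 2) / 2) :=
    ((ha.hasSum.div_const c).add (hx.hasSum.mul_left c)).div_const 2
  have hle := hasSum_le (fun i => ?_) (hasSum_re_mul_inner_of_hasSum_smul hv) hbound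
  · have ha_div : (∑' i, ‖a i‖ ^ 2) / c ≤ ‖v‖ ^ 2 := by
      rwa [div_le_iff₀' hc]
    linarith
  · simpa only [norm_inner_symm] using re_mul_le_half_add_of_pos (a i) (inner 𝕜 v (x i)) hc

end

theorem stmt8_general {H : Type*} [NormedAddCommGroup H] [InnerProductSpace ℂ H]
    (x y : ℕ → H) (B C : ℝ) (hC : 0 < C)
    (hxBessel : ∀ v : H, Summable (fun i => ‖(inner ℂ (x i) v : ℂ)‖ ^ 2) ∧
      ∑' i, ‖(inner ℂ (x i) v : ℂ)‖ ^ 2 ≤ B * ‖v‖ ^ 2)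
    (hyBessel : ∀ v : H, Summable (fun i => ‖(inner ℂ (y i) v : ℂ)‖ ^ 2) ∧
      ∑' i, ‖(inner ℂ (y i) v : ℂ)‖ ^ 2 ≤ C * ‖v‖ ^ 2)
    (hrec : ∀ v : H, HasSum (fun i => (inner ℂ (y i) v : ℂ) • x i) v) :
    ∀ v : H, C⁻¹ * ‖v‖ ^ 2 ≤ ∑' i, ‖(inner ℂ (x i) v : ℂ)‖ ^ 2 := by
  intro v
  rw [inv_mul_le_iff₀ hC]
  exact norm_sq_le_mul_tsum_of_hasSum_smul hC (hrec v) (hyBessel v).1 (hyBessel v).2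
    (hxBessel v).1

/-- If `(x_i)` and `(y_i)` are Bessel sequences in a Hilbert space `H` (with Bessel
bounds `B` and `C` respectively) satisfying the reconstruction formula
`v = Σ_i ⟨v, y_i⟩ x_i`, then `(x_i)` satisfies the lower frame inequality
`C⁻¹ ‖v‖² ≤ Σ_i |⟨v, x_i⟩|²`; hence both `(x_i)` and `(y_i)` are frames. -/
theorem stmt8 {H : Type*} [NormedAddCommGroup H] [InnerProductSpace ℂ H] [CompleteSpace H]
    (x y : ℕ → H) (B C : ℝ) (hC : 0 < C)
    (hxBessel : ∀ v : H, Summable (fun i => ‖(inner ℂ (x i) v : ℂ)‖ ^ 2) ∧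
      ∑' i, ‖(inner ℂ (x i) v : ℂ)‖ ^ 2 ≤ B * ‖v‖ ^ 2)
    (hyBessel : ∀ v : H, Summable (fun i => ‖(inner ℂ (y i) v : ℂ)‖ ^ 2) ∧
      ∑' i, ‖(inner ℂ (y i) v : ℂ)‖ ^ 2 ≤ C * ‖v‖ ^ 2)
    (hrec : ∀ v : H, HasSum (fun i => (inner ℂ (y i) v : ℂ) • x i) v) :
    ∀ v : H, C⁻¹ * ‖v‖ ^ 2 ≤ ∑' i, ‖(inner ℂ (x i) v : ℂ)‖ ^ 2 :=
  stmt8_general x y B C hC hxBessel hyBessel hrec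
end

section
/- Let H be a separable Hilbert space with orthonormal basis (e_i)_{i∈ℕ}. Define the sequence (x_i) obtained by listing e_1 once, e_2 twice, e_3 three times, etc. (x lists e_n with multiplicity n), and (y_i) listing (1/n)e_n with multiplicity n correspondingly. Then: (a) x = Σ_i ⟨x, y_i⟩ x_i unconditionally for every x ∈ H (so (x_i, y_i) is a framing), with ‖x_i‖ ≤ 1 and ‖y_i‖ ≤ 1; (b) Σ_i |⟨e_n, x_i⟩|² = n, so (x_i) is not a Bessel sequence; (c) Σ_i |⟨e_n, y_i⟩|² = 1/n, so (y_i) is Bessel but not a frame. -/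
abbrev FramingIndex : Type := (n : ℕ) × Fin (n + 1)

/-! The families are `e n` repeated `n + 1` times, with weights `1` and `(n + 1)⁻¹`. A finite
partial sum of the expansion, grouped by blocks, is `∑ₙ (kₙ / (n + 1)) ⟪e n, v⟫ e n` with
`0 ≤ kₙ / (n + 1) ≤ 1`, so by orthonormality its norm is controlled by a tail of Bessel's
inequality for `v`; this Cauchy estimate gives unconditional summability, and summing each full
block recovers the Hilbert basis expansion of `v`. In (b) and (c), testing against `e n` only sees
the `n`-th block. -/

open Finset
open scoped InnerProductSpace

section RepeatedOrthonormal

variable {𝕜 H ι : Type*} [RCLike 𝕜] [NormedAddCommGroup H] [InnerProductSpace 𝕜 H]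
  {κ : ι → Type*} [∀ i, Fintype (κ i)] {e : ι → H}

theorem Finset.card_filter_sigma_fst_eq_div_card_le_one [DecidableEq ι]
    (t : Finset (Σ i, κ i)) (i : ι) :
    (#{j ∈ t | j.1 = i} : ℝ) / Fintype.card (κ i) ≤ 1 := by
  refine div_le_one_of_le₀ ?_ (Nat.cast_nonneg _)
  calc (#{j ∈ t | j.1 = i} : ℝ)
      ≤ #(({i} : Finset ι).sigma fun _ => univ : Finset (Σ i, κ i)) := by
        gcongr
        intro j hj
        simp [(mem_filter.mp hj).2]
    _ = Fintype.card (κ i) := by simp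

theorem Orthonormal.sum_fiber_norm_inner_smul_sq (he : Orthonormal 𝕜 e) (w : ι → 𝕜) (i : ι) :
    ∑ j ∈ (({i} : Finset ι).sigma fun _ => univ : Finset (Σ i, κ i)),
      ‖⟪w j.1 • e j.1, e i⟫_𝕜‖ ^ 2 = Fintype.card (κ i) * ‖w i‖ ^ 2 := by
  simp [sum_sigma, inner_smul_left, he.norm_eq_one]

theorem Orthonormal.tsum_norm_inner_smul_sq (he : Orthonormal 𝕜 e) (w : ι → 𝕜) (i : ι) :
    ∑' j : Σ i, κ i, ‖⟪w j.1 • e j.1, e i⟫_𝕜‖ ^ 2 = Fintype.card (κ i) * ‖w i‖ ^ 2 := by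
  rw [tsum_eq_sum (s := ({i} : Finset ι).sigma fun _ => univ) fun j hj => ?_,
    he.sum_fiber_norm_inner_smul_sq]
  have hji : j.1 ≠ i := fun h => hj (by simp [h])
  simp [inner_smul_left, he.inner_eq_zero hji]

theorem Orthonormal.tsum_norm_inner_inv_card_smul_sq (he : Orthonormal 𝕜 e) (i : ι) :
    ∑' j : Σ i, κ i, ‖⟪(Fintype.card (κ j.1) : 𝕜)⁻¹ • e j.1, e i⟫_𝕜‖ ^ 2
      = (Fintype.card (κ i) : ℝ)⁻¹ := by
  rw [he.tsum_norm_inner_smul_sq (fun i => (Fintype.card (κ i) : 𝕜)⁻¹)]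
  rcases (Fintype.card (κ i)).eq_zero_or_pos with h | h
  · simp [h]
  · rw [norm_inv, RCLike.norm_natCast]
    field_simp

theorem Orthonormal.sum_norm_inner_inv_card_smul_sq_le (he : Orthonormal 𝕜 e) (v : H)
    (s : Finset (Σ i, κ i)) :
    ∑ j ∈ s, ‖⟪(Fintype.card (κ j.1) : 𝕜)⁻¹ • e j.1, v⟫_𝕜‖ ^ 2 ≤ ‖v‖ ^ 2 := by
  classical
  have hfiber : ∀ i, #{j ∈ s | j.1 = i} • ((Fintype.card (κ i) : ℝ)⁻¹ ^ 2 * ‖⟪e i, v⟫_𝕜‖ ^ 2)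
      ≤ ‖⟪e i, v⟫_𝕜‖ ^ 2 := by
    intro i
    have hweight : (#{j ∈ s | j.1 = i} : ℝ) * (Fintype.card (κ i) : ℝ)⁻¹ ^ 2 ≤ 1 := by
      rw [sq, ← mul_assoc, ← div_eq_mul_inv]
      exact mul_le_one₀ (s.card_filter_sigma_fst_eq_div_card_le_one i) (by positivity)
        (Nat.cast_inv_le_one _)
    rw [nsmul_eq_mul, ← mul_assoc]
    exact mul_le_of_le_one_left (by positivity) hweight
  calc ∑ j ∈ s, ‖⟪(Fintype.card (κ j.1) : 𝕜)⁻¹ • e j.1, v⟫_𝕜‖ ^ 2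
      = ∑ j ∈ s, (Fintype.card (κ j.1) : ℝ)⁻¹ ^ 2 * ‖⟪e j.1, v⟫_𝕜‖ ^ 2 := by
        simp [inner_smul_left, mul_pow, norm_inv]
    _ = ∑ i ∈ s.image Sigma.fst,
          #{j ∈ s | j.1 = i} • ((Fintype.card (κ i) : ℝ)⁻¹ ^ 2 * ‖⟪e i, v⟫_𝕜‖ ^ 2) :=
        sum_comp (fun i => (Fintype.card (κ i) : ℝ)⁻¹ ^ 2 * ‖⟪e i, v⟫_𝕜‖ ^ 2) Sigma.fst
    _ ≤ ∑ i ∈ s.image Sigma.fst, ‖⟪e i, v⟫_𝕜‖ ^ 2 := sum_le_sum fun i _ => hfiber i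
    _ ≤ ‖v‖ ^ 2 := he.sum_inner_products_le v

theorem Orthonormal.norm_sum_inv_card_smul_sq_le [DecidableEq ι] (he : Orthonormal 𝕜 e)
    (a : ι → 𝕜) (t : Finset (Σ i, κ i)) :
    ‖∑ j ∈ t, ((Fintype.card (κ j.1) : 𝕜)⁻¹ * a j.1) • e j.1‖ ^ 2
      ≤ ∑ i ∈ t.image Sigma.fst, ‖a i‖ ^ 2 := by
  have hnorm := he.orthogonalFamily.norm_sum
    (fun i => (#{j ∈ t | j.1 = i} : 𝕜) * ((Fintype.card (κ i) : 𝕜)⁻¹ * a i)) (t.image Sigma.fst)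
  simp only [LinearIsometry.toSpanSingleton_apply] at hnorm
  rw [sum_comp (fun i => ((Fintype.card (κ i) : 𝕜)⁻¹ * a i) • e i) Sigma.fst]
  simp_rw [← Nat.cast_smul_eq_nsmul 𝕜, smul_smul]
  rw [hnorm]
  refine sum_le_sum fun i _ => pow_le_pow_left₀ (norm_nonneg _) ?_ 2
  rw [← mul_assoc, norm_mul, norm_mul, norm_inv, RCLike.norm_natCast, RCLike.norm_natCast,
    ← div_eq_mul_inv]
  exact mul_le_of_le_one_left (norm_nonneg _) (t.card_filter_sigma_fst_eq_div_card_le_one i)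

theorem Orthonormal.summable_inv_card_smul [CompleteSpace H] (he : Orthonormal 𝕜 e) {a : ι → 𝕜}
    (ha : Summable fun i => ‖a i‖ ^ 2) :
    Summable fun j : Σ i, κ i => ((Fintype.card (κ j.1) : 𝕜)⁻¹ * a j.1) • e j.1 := by
  classical
  refine summable_iff_vanishing_norm.mpr fun ε hε => ?_
  obtain ⟨u, hu⟩ := summable_iff_vanishing_norm.mp ha (ε ^ 2) (by positivity)
  refine ⟨u.sigma fun _ => univ, fun t ht => ?_⟩
  have hdisj : Disjoint (t.image Sigma.fst) u := by
    simp only [disjoint_left, mem_image]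
    rintro _ ⟨j, hj, rfl⟩ hju
    exact disjoint_left.mp ht hj (mem_sigma.mpr ⟨hju, mem_univ _⟩)
  have htail := hu _ hdisj
  rw [Real.norm_of_nonneg (by positivity)] at htail
  exact lt_of_pow_lt_pow_left₀ 2 hε.le ((he.norm_sum_inv_card_smul_sq_le a t).trans_lt htail)

theorem Orthonormal.hasSum_inv_card_smul [CompleteSpace H] [∀ i, Nonempty (κ i)]
    (he : Orthonormal 𝕜 e) {a : ι → 𝕜} {v : H} (h : HasSum (fun i => a i • e i) v) :
    HasSum (fun j : Σ i, κ i => ((Fintype.card (κ j.1) : 𝕜)⁻¹ * a j.1) • e j.1) v := by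
  refine h.sigma_of_hasSum (fun i => ?_) (he.summable_inv_card_smul ?_)
  · have hcard : (Fintype.card (κ i) : 𝕜) ≠ 0 := Nat.cast_ne_zero.mpr Fintype.card_ne_zero
    simpa [← Nat.cast_smul_eq_nsmul 𝕜, smul_smul, hcard] using
      hasSum_fintype fun _ : κ i => ((Fintype.card (κ i) : 𝕜)⁻¹ * a i) • e i
  · exact (he.orthogonalFamily.summable_iff_norm_sq_summable a).mp h.summable

theorem HilbertBasis.hasSum_inner_inv_card_smul_smul [CompleteSpace H] [∀ i, Nonempty (κ i)]
    (b : HilbertBasis ι 𝕜 H) (v : H) :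
    HasSum (fun j : Σ i, κ i => ⟪(Fintype.card (κ j.1) : 𝕜)⁻¹ • b j.1, v⟫_𝕜 • b j.1) v := by
  have h := b.orthonormal.hasSum_inv_card_smul (κ := κ) (b.hasSum_repr v)
  simp only [HilbertBasis.repr_apply_apply] at h
  convert h using 3 with j
  rw [inner_smul_left, map_inv₀, map_natCast]

theorem Orthonormal.not_bessel_comp_fst (he : Orthonormal 𝕜 e)
    (hunb : ∀ N : ℕ, ∃ i, N ≤ Fintype.card (κ i)) :
    ¬ ∃ B : ℝ, ∀ (v : H) (s : Finset (Σ i, κ i)), ∑ j ∈ s, ‖⟪e j.1, v⟫_𝕜‖ ^ 2 ≤ B * ‖v‖ ^ 2 := by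
  rintro ⟨B, hB⟩
  obtain ⟨N, hN⟩ := exists_nat_gt B
  obtain ⟨i, hi⟩ := hunb N
  have hfiber := he.sum_fiber_norm_inner_smul_sq (κ := κ) 1 i
  simp only [Pi.one_apply, one_smul, norm_one, one_pow, mul_one] at hfiber
  have hB_i := hB (e i) (({i} : Finset ι).sigma fun _ => univ)
  rw [hfiber, he.norm_eq_one, one_pow, mul_one] at hB_i
  have : (N : ℝ) ≤ Fintype.card (κ i) := by exact_mod_cast hi
  linarith

theorem Orthonormal.not_frame_inv_card_smul (he : Orthonormal 𝕜 e)
    (hunb : ∀ N : ℕ, ∃ i, N ≤ Fintype.card (κ i)) :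
    ¬ ∃ A : ℝ, 0 < A ∧ ∀ v : H,
      A * ‖v‖ ^ 2 ≤ ∑' j : Σ i, κ i, ‖⟪(Fintype.card (κ j.1) : 𝕜)⁻¹ • e j.1, v⟫_𝕜‖ ^ 2 := by
  rintro ⟨A, hA, hAv⟩
  obtain ⟨N, hN⟩ := exists_nat_gt A⁻¹
  obtain ⟨i, hi⟩ := hunb N
  have hA_i := hAv (e i)
  rw [he.tsum_norm_inner_inv_card_smul_sq, he.norm_eq_one, one_pow, mul_one] at hA_i
  have hcard : A⁻¹ < Fintype.card (κ i) := hN.trans_le (by exact_mod_cast hi)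
  linarith [inv_lt_of_inv_lt₀ hA hcard]

end RepeatedOrthonormal

/-- Let `(e_n)_{n ∈ ℕ}` be an orthonormal basis of a separable Hilbert space `H`.
Let `(x_j)` list `e_n` with multiplicity `n + 1` and `(y_j)` list `(n+1)⁻¹ • e_n`
with multiplicity `n + 1`.  Then:
(a) `(x_j, y_j)` is a framing (`v = Σ_j ⟨v, y_j⟩ x_j` unconditionally) with
    `‖x_j‖ ≤ 1` and `‖y_j‖ ≤ 1`;
(b) `Σ_j |⟨e_n, x_j⟩|² = n + 1` for every `n`, and `(x_j)` is not a Bessel sequence;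
(c) `Σ_j |⟨e_n, y_j⟩|² = (n+1)⁻¹` for every `n`, and `(y_j)` is a Bessel sequence
    but not a frame. -/
theorem stmt9 {H : Type*} [NormedAddCommGroup H] [InnerProductSpace ℂ H] [CompleteSpace H]
    (e : ℕ → H) (he : Orthonormal ℂ e)
    (hcomplete : (Submodule.span ℂ (Set.range e)).topologicalClosure = ⊤)
    (x y : FramingIndex → H)
    (hx : ∀ j : FramingIndex, x j = e j.1)
    (hy : ∀ j : FramingIndex, y j = (((j.1 : ℝ) + 1)⁻¹ : ℂ) • e j.1) :
    -- (a)
    (∀ v : H, HasSum (fun j => (inner ℂ (y j) v : ℂ) • x j) v) ∧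
    (∀ j, ‖x j‖ ≤ 1) ∧ (∀ j, ‖y j‖ ≤ 1) ∧
    -- (b)
    (∀ n : ℕ, ∑' j : FramingIndex, ‖(inner ℂ (x j) (e n) : ℂ)‖ ^ 2 = (n : ℝ) + 1) ∧
    ¬ (∃ B : ℝ, ∀ (v : H) (s : Finset FramingIndex),
        ∑ j ∈ s, ‖(inner ℂ (x j) v : ℂ)‖ ^ 2 ≤ B * ‖v‖ ^ 2) ∧
    -- (c)
    (∀ n : ℕ, ∑' j : FramingIndex, ‖(inner ℂ (y j) (e n) : ℂ)‖ ^ 2 = ((n : ℝ) + 1)⁻¹) ∧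
    (∃ C : ℝ, ∀ (v : H) (s : Finset FramingIndex),
        ∑ j ∈ s, ‖(inner ℂ (y j) v : ℂ)‖ ^ 2 ≤ C * ‖v‖ ^ 2) ∧
    ¬ (∃ A : ℝ, 0 < A ∧ ∀ v : H,
        A * ‖v‖ ^ 2 ≤ ∑' j : FramingIndex, ‖(inner ℂ (y j) v : ℂ)‖ ^ 2) := by
  obtain rfl : x = fun j => e j.1 := funext hx
  obtain rfl : y = fun j => (Fintype.card (Fin (j.1 + 1)) : ℂ)⁻¹ • e j.1 :=
    funext fun j => by simp [hy]
  have hunb : ∀ N : ℕ, ∃ n, N ≤ Fintype.card (Fin (n + 1)) := fun N => ⟨N, by simp⟩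
  have hb : ⇑(HilbertBasis.mk he hcomplete.ge) = e := HilbertBasis.coe_mk he hcomplete.ge
  refine ⟨fun v => hb ▸ (HilbertBasis.mk he hcomplete.ge).hasSum_inner_inv_card_smul_smul v,
    fun j => (he.norm_eq_one _).le, fun j => ?_, fun n => ?_, he.not_bessel_comp_fst hunb,
    fun n => ?_, ⟨1, fun v s => ?_⟩, he.not_frame_inv_card_smul hunb⟩
  · rw [norm_smul, he.norm_eq_one, mul_one, norm_inv, RCLike.norm_natCast]
    exact Nat.cast_inv_le_one _
  · simpa using he.tsum_norm_inner_smul_sq (κ := fun n => Fin (n + 1)) 1 n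
  · exact (he.tsum_norm_inner_inv_card_smul_sq n).trans (by simp)
  · exact (he.sum_norm_inner_inv_card_smul_sq_le v s).trans_eq (one_mul _).symm
end

section
/- If Σ_{i∈ℕ} z_i converges unconditionally in a Hilbert space H, then Σ_{i∈ℕ} ‖z_i‖² < ∞. -/
/-!
By the parallelogram law, `‖v + w‖² + ‖v - w‖² = 2 (‖v‖² + ‖w‖²)`, so one of the two signs gives
`‖v ± w‖² ≥ ‖v‖² + ‖w‖²`. Choosing the signs greedily, every finite sum of squares `∑_{i ∈ F} ‖z i‖²`
is at most `‖∑_{i ∈ A} z i - ∑_{i ∈ F \ A} z i‖²` for some `A ⊆ F`. Unconditional convergence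
bounds all finite partial sums by a common constant `C`, hence all these sums of squares by `(2C)²`.
-/

open Finset

theorem Summable.exists_norm_sum_le {ι E : Type*} [SeminormedAddCommGroup E] {f : ι → E}
    (hf : Summable f) : ∃ C, ∀ s : Finset ι, ‖∑ i ∈ s, f i‖ ≤ C := by
  classical
  obtain ⟨t, ht⟩ := hf.vanishing (Metric.ball_mem_nhds (0 : E) one_pos)
  refine ⟨∑ i ∈ t, ‖f i‖ + 1, fun s => ?_⟩
  have hinter : ‖∑ i ∈ s ∩ t, f i‖ ≤ ∑ i ∈ t, ‖f i‖ :=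
    (norm_sum_le _ _).trans <|
      sum_le_sum_of_subset_of_nonneg inter_subset_right fun _ _ _ => norm_nonneg _
  have hsdiff : ‖∑ i ∈ s \ t, f i‖ < 1 := mem_ball_zero_iff.mp (ht _ disjoint_sdiff_self_left)
  calc ‖∑ i ∈ s, f i‖ = ‖∑ i ∈ s ∩ t, f i + ∑ i ∈ s \ t, f i‖ := by
        rw [sum_inter_add_sum_sdiff]
    _ ≤ ‖∑ i ∈ s ∩ t, f i‖ + ‖∑ i ∈ s \ t, f i‖ := norm_add_le _ _
    _ ≤ ∑ i ∈ t, ‖f i‖ + 1 := add_le_add hinter hsdiff.le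

section InnerProductSpace

variable (𝕜 : Type*) {E : Type*} [RCLike 𝕜] [SeminormedAddCommGroup E] [InnerProductSpace 𝕜 E]

include 𝕜 in
theorem norm_sq_add_norm_sq_le_norm_add_sq_or_norm_sub_sq (v w : E) :
    ‖v‖ ^ 2 + ‖w‖ ^ 2 ≤ ‖v + w‖ ^ 2 ∨ ‖v‖ ^ 2 + ‖w‖ ^ 2 ≤ ‖v - w‖ ^ 2 := by
  by_contra! h
  linarith [parallelogram_law_with_norm 𝕜 v w]

include 𝕜 in
theorem exists_subset_sum_norm_sq_le_norm_sum_sub_sum_sq {ι : Type*} [DecidableEq ι]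
    (f : ι → E) (s : Finset ι) :
    ∃ t ⊆ s, ∑ i ∈ s, ‖f i‖ ^ 2 ≤ ‖∑ i ∈ t, f i - ∑ i ∈ s \ t, f i‖ ^ 2 := by
  induction s using Finset.induction with
  | empty => exact ⟨∅, empty_subset _, by simp⟩
  | insert a s ha ih =>
    obtain ⟨t, hts, hle⟩ := ih
    have hat : a ∉ t := fun h => ha (hts h)
    rw [sum_insert ha]
    rcases norm_sq_add_norm_sq_le_norm_add_sq_or_norm_sub_sq 𝕜
      (∑ i ∈ t, f i - ∑ i ∈ s \ t, f i) (f a) with hadd | hsub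
    · refine ⟨insert a t, insert_subset_insert a hts, ?_⟩
      rw [insert_sdiff_insert, sdiff_insert_of_notMem ha, sum_insert hat]
      calc ‖f a‖ ^ 2 + ∑ i ∈ s, ‖f i‖ ^ 2
          ≤ ‖∑ i ∈ t, f i - ∑ i ∈ s \ t, f i‖ ^ 2 + ‖f a‖ ^ 2 := by linarith
        _ ≤ _ := hadd.trans_eq (by congr 2; abel)
    · refine ⟨t, hts.trans (subset_insert a s), ?_⟩
      rw [insert_sdiff_of_notMem _ hat, sum_insert (fun h => ha (mem_sdiff.mp h).1)]
      calc ‖f a‖ ^ 2 + ∑ i ∈ s, ‖f i‖ ^ 2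
          ≤ ‖∑ i ∈ t, f i - ∑ i ∈ s \ t, f i‖ ^ 2 + ‖f a‖ ^ 2 := by linarith
        _ ≤ _ := hsub.trans_eq (by congr 2; abel)

end InnerProductSpace

theorem stmt12_general {H : Type*} [NormedAddCommGroup H] [InnerProductSpace ℂ H]
    (z : ℕ → H) (s : H) (h : HasSum z s) :
    Summable (fun i => ‖z i‖ ^ 2) := by
  obtain ⟨C, hC⟩ := h.summable.exists_norm_sum_le
  refine summable_of_sum_le (c := (2 * C) ^ 2) (fun i => by positivity) fun F => ?_
  obtain ⟨A, -, hA⟩ := exists_subset_sum_norm_sq_le_norm_sum_sub_sum_sq ℂ z F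
  refine hA.trans (pow_le_pow_left₀ (norm_nonneg _) ?_ 2)
  calc ‖∑ i ∈ A, z i - ∑ i ∈ F \ A, z i‖ ≤ ‖∑ i ∈ A, z i‖ + ‖∑ i ∈ F \ A, z i‖ := norm_sub_le _ _
    _ ≤ 2 * C := by linarith [hC A, hC (F \ A)]

/-- If `Σ_i z_i` converges unconditionally in a Hilbert space `H` (i.e. the family
`z` has a sum), then `Σ_i ‖z_i‖² < ∞`. -/
theorem stmt12 {H : Type*} [NormedAddCommGroup H] [InnerProductSpace ℂ H] [CompleteSpace H]
    (z : ℕ → H) (s : H) (h : HasSum z s) :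
    Summable (fun i => ‖z i‖ ^ 2) :=
  stmt12_general z s h
end

section
/- A pair of sequences (x_i, y_i)_{i∈ℕ} is a framing for a Hilbert space H if and only if (y_i, x_i)_{i∈ℕ} is a framing for H. -/
/-!
The partial sum operators `S_s v = ∑ i ∈ s, ⟪y i, v⟫ • x i` of a framing are pointwise bounded,
hence uniformly bounded by Banach–Steinhaus, and their adjoints are the partial sum operators
of the swapped pair. So the finite subsums of `∑ ⟪x i, v⟫ • y i` are bounded. In a Hilbert
space this already forces summability: if the Cauchy criterion failed, one could pick
disjoint blocks of norm `≥ ε` and, by the parallelogram law, give them signs so that the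
squared norm of the signed sum grows by `ε²` with each block. The sum is then identified
with `v` by testing against inner products.
-/

open Finset
open scoped InnerProduct

theorem Summable.exists_forall_norm_finset_sum_le {ι E : Type*} [SeminormedAddCommGroup E]
    {f : ι → E} (hf : Summable f) : ∃ M, ∀ s : Finset ι, ‖∑ i ∈ s, f i‖ ≤ M := by
  classical
  obtain ⟨s₀, hs₀⟩ := cauchySeq_finset_iff_vanishing_norm.1 hf.hasSum.cauchySeq 1 one_pos
  refine ⟨∑ i ∈ s₀, ‖f i‖ + 1, fun s => ?_⟩
  rw [← sum_inter_add_sum_sdiff s s₀]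
  refine (norm_add_le _ _).trans (add_le_add ?_ (hs₀ _ disjoint_sdiff_self_left).le)
  exact (norm_sum_le _ _).trans
    (sum_le_sum_of_subset_of_nonneg inter_subset_right fun _ _ _ => norm_nonneg _)

section InnerProductSpace

variable {E ι : Type*} [NormedAddCommGroup E]

theorem exists_nat_mul_sq_le_norm_sum_sub_sum (𝕜 : Type*) [RCLike 𝕜] [InnerProductSpace 𝕜 E]
    {a : ι → E} {ε : ℝ} (hε : 0 ≤ ε) (h : ∀ s : Finset ι, ∃ t, Disjoint t s ∧ ε ≤ ‖∑ i ∈ t, a i‖) (n : ℕ) :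
    ∃ P Q : Finset ι, n * ε ^ 2 ≤ ‖∑ i ∈ P, a i - ∑ i ∈ Q, a i‖ ^ 2 := by
  classical
  induction n with
  | zero => exact ⟨∅, ∅, by simp⟩
  | succ n ih =>
    obtain ⟨P, Q, hPQ⟩ := ih
    obtain ⟨t, ht, hεt⟩ := h (P ∪ Q)
    have htP : Disjoint P t := (ht.mono_right subset_union_left).symm
    have htQ : Disjoint Q t := (ht.mono_right subset_union_right).symm
    have hsq : ε ^ 2 ≤ ‖∑ i ∈ t, a i‖ ^ 2 := pow_le_pow_left₀ hε hεt 2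
    -- one of `s ± u` has squared norm at least `‖s‖² + ‖u‖²`
    have hpar := parallelogram_law_with_norm 𝕜 (∑ i ∈ P, a i - ∑ i ∈ Q, a i) (∑ i ∈ t, a i)
    push_cast
    rcases le_total ‖∑ i ∈ P, a i - ∑ i ∈ Q, a i - ∑ i ∈ t, a i‖
      ‖∑ i ∈ P, a i - ∑ i ∈ Q, a i + ∑ i ∈ t, a i‖ with hle | hle
    · refine ⟨P ∪ t, Q, ?_⟩
      rw [sum_union htP, add_sub_right_comm]
      nlinarith [pow_le_pow_left₀ (norm_nonneg _) hle 2]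
    · refine ⟨P, Q ∪ t, ?_⟩
      rw [sum_union htQ, ← sub_sub]
      nlinarith [pow_le_pow_left₀ (norm_nonneg _) hle 2]

theorem summable_of_forall_norm_finset_sum_le (𝕜 : Type*) [RCLike 𝕜] [InnerProductSpace 𝕜 E]
    [CompleteSpace E] {a : ι → E} {M : ℝ}
    (h : ∀ s : Finset ι, ‖∑ i ∈ s, a i‖ ≤ M) : Summable a := by
  rw [summable_iff_vanishing_norm]
  by_contra! hfail
  obtain ⟨ε, hε, hblocks⟩ := hfail
  obtain ⟨n, hn⟩ := exists_nat_gt ((2 * M) ^ 2 / ε ^ 2)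
  obtain ⟨P, Q, hPQ⟩ := exists_nat_mul_sq_le_norm_sum_sub_sum 𝕜 hε.le hblocks n
  have hdiff : ‖∑ i ∈ P, a i - ∑ i ∈ Q, a i‖ ≤ 2 * M :=
    (norm_sub_le _ _).trans (by linarith [h P, h Q])
  rw [div_lt_iff₀ (by positivity)] at hn
  nlinarith [pow_le_pow_left₀ (norm_nonneg _) hdiff 2]

end InnerProductSpace

section Framing

variable (𝕜 : Type*) {H ι : Type*} [RCLike 𝕜] [NormedAddCommGroup H] [InnerProductSpace 𝕜 H]

local notation "⟪" a ", " b "⟫" => inner 𝕜 a b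

noncomputable def partialFrameOp (x y : ι → H) (s : Finset ι) : H →L[𝕜] H :=
  ∑ i ∈ s, (innerSL 𝕜 (y i)).smulRight (x i)

variable {𝕜}

@[simp]
theorem partialFrameOp_apply (x y : ι → H) (s : Finset ι) (v : H) :
    partialFrameOp 𝕜 x y s v = ∑ i ∈ s, ⟪y i, v⟫ • x i := by
  simp [partialFrameOp]

variable [CompleteSpace H]

open ContinuousLinearMap in
theorem adjoint_partialFrameOp (x y : ι → H) (s : Finset ι) :
    (partialFrameOp 𝕜 x y s)† = partialFrameOp 𝕜 y x s := by
  refine ((eq_adjoint_iff _ _).2 fun v w => ?_).symm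
  simp [sum_inner, inner_sum, inner_smul_left, inner_smul_right, mul_comm]

theorem exists_forall_norm_partialFrameOp_le {x y : ι → H}
    (h : ∀ v, Summable fun i => ⟪y i, v⟫ • x i) :
    ∃ C, ∀ s, ‖partialFrameOp 𝕜 x y s‖ ≤ C :=
  banach_steinhaus fun v => by simpa using (h v).exists_forall_norm_finset_sum_le

theorem hasSum_inner_smul_swap {x y : ι → H} (h : ∀ v, HasSum (fun i => ⟪y i, v⟫ • x i) v)
    (v : H) : HasSum (fun i => ⟪x i, v⟫ • y i) v := by
  obtain ⟨C, hC⟩ := exists_forall_norm_partialFrameOp_le (𝕜 := 𝕜) fun w => (h w).summable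
  have hbound : ∀ s, ‖∑ i ∈ s, ⟪x i, v⟫ • y i‖ ≤ C * ‖v‖ := fun s => by
    rw [← partialFrameOp_apply, ← adjoint_partialFrameOp]
    refine ((partialFrameOp 𝕜 x y s)†.le_opNorm v).trans ?_
    rw [ContinuousLinearMap.adjoint.norm_map]
    gcongr
    exact hC s
  obtain ⟨u, hu⟩ := summable_of_forall_norm_finset_sum_le 𝕜 hbound
  suffices u = v from this ▸ hu
  refine ext_inner_left 𝕜 fun w => ((innerSL 𝕜 w).hasSum hu).unique ?_
  have hw := (RCLike.hasSum_conj' 𝕜).2 ((innerSL 𝕜 v).hasSum (h w))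
  simpa [inner_smul_right, mul_comm] using hw

end Framing

/-- `(x_i, y_i)` is a framing for a Hilbert space `H` if and only if `(y_i, x_i)`
is a framing for `H`. -/
theorem stmt13 {H : Type*} [NormedAddCommGroup H] [InnerProductSpace ℂ H] [CompleteSpace H]
    (x y : ℕ → H) :
    (∀ v : H, HasSum (fun i => (inner ℂ (y i) v : ℂ) • x i) v) ↔
      (∀ v : H, HasSum (fun i => (inner ℂ (x i) v : ℂ) • y i) v) :=
  ⟨hasSum_inner_smul_swap, hasSum_inner_smul_swap⟩
end

section
/- Let A be a finite-rank bounded operator on a Hilbert space H of rank k. Then there exist rank-one operators Q_1, ..., Q_k with A = Σ_{i=1}^k Q_i and ‖Σ_{i∈I} Q_i‖ ≤ ‖A‖ for every subset I ⊆ {1, ..., k}. -/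
/-!
Fix an orthonormal basis `(e i)` of the range of `A` and put `Q i = e i ⊗ A† (e i)`, i.e.
`Q i = (e i ⊗ e i) ∘ A`. For every `I`, `∑ i ∈ I, e i ⊗ e i` is the orthogonal projection onto
`span {e i | i ∈ I}`, so `‖∑ i ∈ I, Q i‖ ≤ ‖A‖`; for `I = univ` that projection fixes the range
of `A`, whence `∑ i, Q i = A`.
-/

open InnerProductSpace ContinuousLinearMap

section

variable {𝕜 E F ι : Type*} [RCLike 𝕜] [NormedAddCommGroup E] [InnerProductSpace 𝕜 E]

theorem Orthonormal.sum_rankOne_self_eq_starProjection [DecidableEq E] {v : ι → E}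
    (hv : Orthonormal 𝕜 v) (s : Finset ι) :
    ∑ i ∈ s, rankOne 𝕜 (v i) (v i) = (Submodule.span 𝕜 (s.image v : Set E)).starProjection := by
  rw [(OrthonormalBasis.span hv s).starProjection_eq_sum_rankOne]
  simp only [OrthonormalBasis.span_apply]
  exact (Finset.sum_coe_sort s fun i => rankOne 𝕜 (v i) (v i)).symm

theorem Orthonormal.norm_sum_rankOne_self_le {v : ι → E} (hv : Orthonormal 𝕜 v) (s : Finset ι) :
    ‖∑ i ∈ s, rankOne 𝕜 (v i) (v i)‖ ≤ 1 := by
  classical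
  rw [hv.sum_rankOne_self_eq_starProjection]
  exact Submodule.starProjection_norm_le _

variable [CompleteSpace E] [NormedAddCommGroup F] [InnerProductSpace 𝕜 F] [CompleteSpace F]

theorem sum_rankOne_adjoint_eq_comp (A : E →L[𝕜] F) (v : ι → F) (s : Finset ι) :
    ∑ i ∈ s, rankOne 𝕜 (v i) (adjoint A (v i)) = (∑ i ∈ s, rankOne 𝕜 (v i) (v i)) ∘L A := by
  ext x
  simp only [sum_apply, comp_apply, rankOne_apply, adjoint_inner_left]

theorem Orthonormal.norm_sum_rankOne_adjoint_le (A : E →L[𝕜] F) {v : ι → F}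
    (hv : Orthonormal 𝕜 v) (s : Finset ι) :
    ‖∑ i ∈ s, rankOne 𝕜 (v i) (adjoint A (v i))‖ ≤ ‖A‖ := by
  rw [sum_rankOne_adjoint_eq_comp]
  calc _ ≤ ‖∑ i ∈ s, rankOne 𝕜 (v i) (v i)‖ * ‖A‖ := opNorm_comp_le _ _
    _ ≤ 1 * ‖A‖ := by gcongr; exact hv.norm_sum_rankOne_self_le s
    _ = ‖A‖ := one_mul _

theorem OrthonormalBasis.sum_rankOne_adjoint_eq_of_range_le [Fintype ι] {U : Submodule 𝕜 F}
    [U.HasOrthogonalProjection] (b : OrthonormalBasis ι 𝕜 U) (A : E →L[𝕜] F)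
    (hA : LinearMap.range (A : E →ₗ[𝕜] F) ≤ U) :
    ∑ i, rankOne 𝕜 (b i : F) (adjoint A (b i)) = A := by
  rw [sum_rankOne_adjoint_eq_comp, ← b.starProjection_eq_sum_rankOne]
  ext x
  exact Submodule.starProjection_eq_self_iff.mpr
    (hA (LinearMap.mem_range_self (A : E →ₗ[𝕜] F) x))

end

/-- Let `A` be a finite-rank bounded operator on a Hilbert space `H` of rank `k`.
Then `A = Q_1 + ⋯ + Q_k` with each `Q_i` a rank-one operator and
`‖Σ_{i ∈ I} Q_i‖ ≤ ‖A‖` for every subset `I ⊆ {1, …, k}`. -/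
theorem stmt18 {H : Type*} [NormedAddCommGroup H] [InnerProductSpace ℂ H] [CompleteSpace H]
    (A : H →L[ℂ] H) (k : ℕ)
    (hfin : FiniteDimensional ℂ (LinearMap.range (A : H →ₗ[ℂ] H)))
    (hrank : Module.finrank ℂ (LinearMap.range (A : H →ₗ[ℂ] H)) = k) :
    ∃ Q : Fin k → (H →L[ℂ] H),
      (∀ i, ∃ u w : H, ∀ z : H, Q i z = (inner ℂ w z : ℂ) • u) ∧
      A = ∑ i, Q i ∧
      ∀ I : Finset (Fin k), ‖∑ i ∈ I, Q i‖ ≤ ‖A‖ := by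
  let b : OrthonormalBasis (Fin k) ℂ (LinearMap.range (A : H →ₗ[ℂ] H)) :=
    (stdOrthonormalBasis ℂ _).reindex (finCongr hrank)
  have hb : Orthonormal ℂ fun i => (b i : H) :=
    b.orthonormal.comp_linearIsometry (Submodule.subtypeₗᵢ _)
  refine ⟨fun i => rankOne ℂ (b i : H) (adjoint A (b i)), fun i => ⟨_, _, fun z => rfl⟩,
    (b.sum_rankOne_adjoint_eq_of_range_le A le_rfl).symm, hb.norm_sum_rankOne_adjoint_le A⟩
end

section
/- Uniform boundedness of Rademacher projections: Let 1 < p < ∞ with conjugate exponent q, and let r_1,...,r_n ∈ ℓ_p^{2^n} be the Rademacher vectors r_i = 2^{-n/p} Σ_{j=1}^{2^n} ε_{ij} e_j (with signs ε_{ij} = ±1 satisfying Σ_j ε_{ij}ε_{kj} = δ_{ik}·2^n), and r_i* ∈ ℓ_q^{2^n} the dual Rademacher vectors. Then the projection P_n : ℓ_p^{2^n} → ℓ_p^{2^n} given by P_n(x) = Σ_{i=1}^n r_i*(x) r_i satisfies P_n² = P_n and ‖P_n‖ ≤ B_p B_q, where B_p, B_q are the upper Khintchine constants (so the P_n are uniformly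 bounded in n). -/
/-! The normalisations `2^{-n/p}` and `2^{-n/q}` multiply to `2^{-n}`, so orthogonality of the
signs makes `r i` and `rs i` biorthogonal; hence `P` fixes each `r i` and is idempotent.
For the norm, Khintchine for the `r i` gives `‖P x‖ ≤ Bp (∑ i, (rs i x)²)^{1/2}`. To bound this
square function, pair `x` with `∑ i, a i • rstar i` for `a i = rs i x` itself: Hölder and
Khintchine for the `rstar i` give `∑ i, a i² ≤ Bq ‖a‖₂ ‖x‖`, i.e. `‖a‖₂ ≤ Bq ‖x‖`. -/

open scoped ENNReal
open Finset

theorem ENNReal.HolderConjugate.inv_toReal_add_inv_toReal {p q : ℝ≥0∞} [p.HolderConjugate q] :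
    p.toReal⁻¹ + q.toReal⁻¹ = 1 := by
  have h := congrArg ENNReal.toReal (ENNReal.HolderConjugate.inv_add_inv_eq_one p q)
  rwa [ENNReal.toReal_add (ENNReal.inv_ne_top.2 (ENNReal.HolderConjugate.ne_zero p q))
    (ENNReal.inv_ne_top.2 (ENNReal.HolderConjugate.ne_zero q p)), ENNReal.toReal_inv,
    ENNReal.toReal_inv, ENNReal.toReal_one] at h

theorem Real.sqrt_le_of_le_mul_sqrt {S C : ℝ} (hC : 0 ≤ C) (h : S ≤ C * √S) : √S ≤ C := by
  rcases le_or_gt S 0 with hS | hS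
  · rwa [Real.sqrt_eq_zero'.2 hS]
  · refine le_of_mul_le_mul_right ?_ (Real.sqrt_pos.2 hS)
    rwa [Real.mul_self_sqrt hS.le]

theorem LinearMap.comp_self_of_biorthogonal {R E ι : Type*} [Semiring R] [AddCommMonoid E]
    [Module R E] [Fintype ι] (r : ι → E) (rs : ι → E → R)
    (hrs : ∀ i (c : ι → R), rs i (∑ k, c k • r k) = c i)
    (P : E →ₗ[R] E) (hP : ∀ x, P x = ∑ i, rs i x • r i) : P ∘ₗ P = P := by
  ext x
  rw [comp_apply, hP x, hP]
  simp only [hrs]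

namespace PiLp

variable {ι κ : Type*} [Fintype ι]

theorem sum_smul_apply {p : ℝ≥0∞} (r : ι → PiLp p (fun _ : κ => ℝ)) (c : ι → ℝ) (j : κ) :
    (∑ i, c i • r i) j = ∑ i, c i * r i j := by
  simp

variable [Fintype κ]

theorem sum_mul_le_norm_one_mul_norm {p : ℝ≥0∞} [Fact (1 ≤ p)] (f : PiLp 1 (fun _ : κ => ℝ))
    (x : PiLp p (fun _ : κ => ℝ)) : ∑ j, f j * x j ≤ ‖f‖ * ‖x‖ := by
  rw [norm_eq_of_L1, sum_mul]
  refine sum_le_sum fun j _ => ?_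
  calc f j * x j ≤ |f j * x j| := le_abs_self _
    _ = ‖f j‖ * ‖x j‖ := abs_mul _ _
    _ ≤ ‖f j‖ * ‖x‖ := by gcongr; exact norm_apply_le x j

theorem sum_mul_le_norm_mul_norm {p q : ℝ≥0∞} [Fact (1 ≤ p)] [Fact (1 ≤ q)]
    [p.HolderConjugate q] (f : PiLp q (fun _ : κ => ℝ)) (x : PiLp p (fun _ : κ => ℝ)) :
    ∑ j, f j * x j ≤ ‖f‖ * ‖x‖ := by
  by_cases hp : p = ∞
  · obtain rfl : q = 1 := (ENNReal.HolderConjugate.eq_top_iff_eq_one p q).1 hp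
    exact sum_mul_le_norm_one_mul_norm f x
  by_cases hq : q = ∞
  · obtain rfl : p = 1 := (ENNReal.HolderConjugate.eq_top_iff_eq_one q p).1 hq
    simpa only [mul_comm] using sum_mul_le_norm_one_mul_norm x f
  rw [norm_eq_sum (ENNReal.toReal_pos (ENNReal.HolderConjugate.ne_zero q p) hq) f,
    norm_eq_sum (ENNReal.toReal_pos (ENNReal.HolderConjugate.ne_zero p q) hp) x]
  simpa only [Real.norm_eq_abs, one_div] using Real.inner_le_Lp_mul_Lq univ (f ·) (x ·)
    (ENNReal.HolderConjugate.toReal_of_ne_top hq hp)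

theorem sqrt_sum_sq_sum_mul_le {p q : ℝ≥0∞} [Fact (1 ≤ p)] [Fact (1 ≤ q)] [p.HolderConjugate q]
    (rstar : ι → PiLp q (fun _ : κ => ℝ)) {B : ℝ} (hB0 : 0 ≤ B)
    (hB : ∀ a : ι → ℝ, ‖∑ i, a i • rstar i‖ ≤ B * √(∑ i, a i ^ 2))
    (x : PiLp p (fun _ : κ => ℝ)) :
    √(∑ i, (∑ j, rstar i j * x j) ^ 2) ≤ B * ‖x‖ := by
  set a : ι → ℝ := fun i => ∑ j, rstar i j * x j
  refine Real.sqrt_le_of_le_mul_sqrt (by positivity) ?_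
  calc ∑ i, a i ^ 2 = ∑ i, a i * ∑ j, rstar i j * x j := by simp only [a, sq]
    _ = ∑ j, (∑ i, a i • rstar i) j * x j := by
        simp only [sum_smul_apply, mul_sum, sum_mul, mul_assoc]
        exact sum_comm
    _ ≤ ‖∑ i, a i • rstar i‖ * ‖x‖ := sum_mul_le_norm_mul_norm _ _
    _ ≤ B * √(∑ i, a i ^ 2) * ‖x‖ := by gcongr; exact hB a
    _ = B * ‖x‖ * √(∑ i, a i ^ 2) := by ring

theorem sum_mul_sum_smul_apply_of_dual [DecidableEq ι] {p : ℝ≥0∞} (u : ι → κ → ℝ)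
    (r : ι → PiLp p (fun _ : κ => ℝ))
    (hdual : ∀ i k, ∑ j, u i j * r k j = if i = k then 1 else 0) (c : ι → ℝ) (i : ι) :
    ∑ j, u i j * (∑ k, c k • r k) j = c i := by
  calc ∑ j, u i j * (∑ k, c k • r k) j = ∑ k, c k * ∑ j, u i j * r k j := by
        simp only [sum_smul_apply, mul_sum, mul_left_comm (u i _)]
        exact sum_comm
    _ = c i := by simp [hdual]

end PiLp

theorem sum_mul_eq_ite_of_orthogonal {ι κ : Type*} [Fintype κ] [DecidableEq ι] {N s t : ℝ}
    (hN : 0 < N) (hst : s + t = 1) (ε : ι → κ → ℝ)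
    (horth : ∀ i k, ∑ j, ε i j * ε k j = if i = k then N else 0) (u v : ι → κ → ℝ)
    (hu : ∀ i j, u i j = N ^ (-s) * ε i j) (hv : ∀ i j, v i j = N ^ (-t) * ε i j) (i k : ι) :
    ∑ j, u i j * v k j = if i = k then 1 else 0 := by
  have hscale : N ^ (-s) * N ^ (-t) * N = 1 := by
    rw [← Real.rpow_add hN, ← Real.rpow_add_one hN.ne', show -s + -t + 1 = 0 by linarith,
      Real.rpow_zero]
  calc ∑ j, u i j * v k j = N ^ (-s) * N ^ (-t) * ∑ j, ε i j * ε k j := by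
        rw [mul_sum]
        exact sum_congr rfl fun j _ => by rw [hu, hv]; ring
    _ = if i = k then 1 else 0 := by rw [horth]; split_ifs <;> simp [hscale]

theorem stmt19_general (n : ℕ) (p q : ℝ≥0∞) [Fact (1 ≤ p)] [Fact (1 ≤ q)]
    (hpq : 1 / p + 1 / q = 1)
    (ε : Fin n → Fin (2 ^ n) → ℝ)
    (horth : ∀ i k : Fin n, ∑ j, ε i j * ε k j = if i = k then (2 ^ n : ℝ) else 0)
    (r : Fin n → PiLp p (fun _ : Fin (2 ^ n) => ℝ))
    (hr : ∀ i j, r i j = ((2 : ℝ) ^ n) ^ (-(1 / p.toReal)) * ε i j)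
    (rstar : Fin n → PiLp q (fun _ : Fin (2 ^ n) => ℝ))
    (hrstar : ∀ i j, rstar i j = ((2 : ℝ) ^ n) ^ (-(1 / q.toReal)) * ε i j)
    (rs : Fin n → PiLp p (fun _ : Fin (2 ^ n) => ℝ) → ℝ)
    (hrs : ∀ i x, rs i x = ∑ j, rstar i j * x j)
    (Bp Bq : ℝ) (hBp0 : 0 ≤ Bp) (hBq0 : 0 ≤ Bq)
    (hBp : ∀ a : Fin n → ℝ, ‖∑ i, a i • r i‖ ≤ Bp * Real.sqrt (∑ i, (a i) ^ 2))
    (hBq : ∀ a : Fin n → ℝ, ‖∑ i, a i • rstar i‖ ≤ Bq * Real.sqrt (∑ i, (a i) ^ 2))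
    (P : PiLp p (fun _ : Fin (2 ^ n) => ℝ) →ₗ[ℝ] PiLp p (fun _ : Fin (2 ^ n) => ℝ))
    (hP : ∀ x, P x = ∑ i, rs i x • r i) :
    P ∘ₗ P = P ∧ ∀ x, ‖P x‖ ≤ Bp * Bq * ‖x‖ := by
  have : p.HolderConjugate q := ENNReal.holderConjugate_iff.2 (by simpa only [one_div] using hpq)
  have hdual : ∀ i k, ∑ j, rstar i j * r k j = if i = k then 1 else 0 :=
    sum_mul_eq_ite_of_orthogonal (by positivity) (by
      simpa only [one_div, add_comm] using ENNReal.HolderConjugate.inv_toReal_add_inv_toReal)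
      ε horth _ _ hrstar hr
  refine ⟨LinearMap.comp_self_of_biorthogonal r rs (fun i c => ?_) P hP, fun x => ?_⟩
  · rw [hrs]
    exact PiLp.sum_mul_sum_smul_apply_of_dual _ r hdual c i
  calc ‖P x‖ = ‖∑ i, rs i x • r i‖ := by rw [hP]
    _ ≤ Bp * √(∑ i, rs i x ^ 2) := hBp _
    _ ≤ Bp * (Bq * ‖x‖) := by
        gcongr
        simpa only [hrs] using PiLp.sqrt_sum_sq_sum_mul_le rstar hBq0 hBq x
    _ = Bp * Bq * ‖x‖ := by ring

/-- **Uniform boundedness of the Rademacher projections.**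
Let `1 < p < ∞` with conjugate exponent `q`, let `ε i j = ±1` be signs satisfying the
orthogonality relations `Σ_j ε i j · ε k j = δ_{ik} · 2ⁿ`, let
`r i = 2^{-n/p} Σ_j ε i j · e j ∈ ℓ_p^{2ⁿ}` be the Rademacher vectors, and let
`rs i` be the dual Rademacher functionals `rs i x = Σ_j 2^{-n/q} ε i j · x j`.
If `Bp` (resp. `Bq`) is an upper Khintchine constant for the Rademacher vectors in
`ℓ_p^{2ⁿ}` (resp. for the dual Rademacher vectors in `ℓ_q^{2ⁿ}`), then the map
`P x = Σ_i rs i x • r i` is an idempotent (a projection) on `ℓ_p^{2ⁿ}` with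
`‖P x‖ ≤ Bp · Bq · ‖x‖` for all `x`, i.e. `‖P‖ ≤ Bp · Bq`, uniformly in `n`. -/
theorem stmt19 (n : ℕ) (p q : ℝ≥0∞) [Fact (1 ≤ p)] [Fact (1 ≤ q)]
    (hp : 1 < p) (hq : 1 < q) (hpq : 1 / p + 1 / q = 1)
    (ε : Fin n → Fin (2 ^ n) → ℝ) (hε : ∀ i j, ε i j = 1 ∨ ε i j = -1)
    (horth : ∀ i k : Fin n, ∑ j, ε i j * ε k j = if i = k then (2 ^ n : ℝ) else 0)
    (r : Fin n → PiLp p (fun _ : Fin (2 ^ n) => ℝ))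
    (hr : ∀ i j, r i j = ((2 : ℝ) ^ n) ^ (-(1 / p.toReal)) * ε i j)
    (rstar : Fin n → PiLp q (fun _ : Fin (2 ^ n) => ℝ))
    (hrstar : ∀ i j, rstar i j = ((2 : ℝ) ^ n) ^ (-(1 / q.toReal)) * ε i j)
    (rs : Fin n → PiLp p (fun _ : Fin (2 ^ n) => ℝ) → ℝ)
    (hrs : ∀ i x, rs i x = ∑ j, rstar i j * x j)
    (Bp Bq : ℝ) (hBp0 : 0 ≤ Bp) (hBq0 : 0 ≤ Bq)
    (hBp : ∀ a : Fin n → ℝ, ‖∑ i, a i • r i‖ ≤ Bp * Real.sqrt (∑ i, (a i) ^ 2))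
    (hBq : ∀ a : Fin n → ℝ, ‖∑ i, a i • rstar i‖ ≤ Bq * Real.sqrt (∑ i, (a i) ^ 2))
    (P : PiLp p (fun _ : Fin (2 ^ n) => ℝ) →ₗ[ℝ] PiLp p (fun _ : Fin (2 ^ n) => ℝ))
    (hP : ∀ x, P x = ∑ i, rs i x • r i) :
    P ∘ₗ P = P ∧ ∀ x, ‖P x‖ ≤ Bp * Bq * ‖x‖ :=
  stmt19_general n p q hpq ε horth r hr rstar hrstar rs hrs Bp Bq hBp0 hBq0 hBp hBq P hP
end
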